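/- Explicit formula at dyadic points: Let G : [0,1] → ℂ be the unique continuous solution of G(x) = αG(2x) - 1/2 on [0,1/2) and G(x) = (1-α)G(2x-1) + 1/2 on [1/2,1], α = (1-i)/2. Then for every dyadic x = (0.ω₁⋯ω_{k-1}1)₂ ∈ (0,1), G(x) = (1/2)∑ₙ₌₁^{k-1} (-1)^(1-ωₙ) α^(n-1-q(n-1)) (1-α)^(q(n-1)), where q(n) = ω₁+⋯+ωₙ, q(0)=0. -/

import Mathlib

open Complex

noncomputable def α : ℂ := (1 - I) / 2

def q (ω : ℕ → ℕ) (n : ℕ) : ℕ := ∑ k ∈ Finset.Icc 1 n, ω k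

lemma q_le (ω : ℕ → ℕ) (hω : ∀ n, ω n ≤ 1) (m : ℕ) : q ω m ≤ m := by
  unfold q
  calc ∑ k ∈ Finset.Icc 1 m, ω k ≤ ∑ _k ∈ Finset.Icc 1 m, 1 :=
        Finset.sum_le_sum fun i _ => hω i
    _ = m := by simp

lemma sum_shift {M : Type*} [AddCommMonoid M] (f : ℕ → M) (a b : ℕ) :
    ∑ i ∈ Finset.Icc (a+1) (b+1), f i = ∑ i ∈ Finset.Icc a b, f (i+1) := by
  rw [← Finset.map_add_right_Icc, Finset.sum_map]
  rfl

lemma sum_shift_Ico {M : Type*} [AddCommMonoid M] (f : ℕ → M) (a b : ℕ) :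
    ∑ i ∈ Finset.Ico (a+1) (b+1), f i = ∑ i ∈ Finset.Ico a b, f (i+1) := by
  rw [← Finset.map_add_right_Ico, Finset.sum_map]
  rfl

lemma q_shift (ω : ℕ → ℕ) (m : ℕ) :
    q ω (m+1) = ω 1 + q (fun n => ω (n+1)) m := by
  unfold q
  have hins : Finset.Icc 1 (m+1) = insert 1 (Finset.Icc 2 (m+1)) := by
    ext x; simp only [Finset.mem_Icc, Finset.mem_insert]; omega
  rw [hins, Finset.sum_insert (by simp)]
  congr 1
  exact sum_shift ω 1 m

lemma geom_sum_half (k : ℕ) :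
    ∑ n ∈ Finset.Icc 1 k, (1:ℝ)/2^n = 1 - 1/2^k := by
  induction k with
  | zero => simp
  | succ k ih =>
    rw [Finset.sum_Icc_succ_top (by omega), ih]
    ring

lemma sum_lt_one (ω : ℕ → ℕ) (hω : ∀ n, ω n ≤ 1) (k : ℕ) :
    ∑ n ∈ Finset.Icc 1 k, (ω n : ℝ)/2^n < 1 := by
  have h1 : ∑ n ∈ Finset.Icc 1 k, (ω n : ℝ)/2^n ≤ ∑ n ∈ Finset.Icc 1 k, (1:ℝ)/2^n := by
    apply Finset.sum_le_sum
    intro i _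
    have : (ω i : ℝ) ≤ 1 := by exact_mod_cast hω i
    gcongr
  have h2 := geom_sum_half k
  have : (0:ℝ) < 1/2^k := by positivity
  linarith

lemma aux_main (G : ℝ → ℂ)
    (h0 : ∀ x : ℝ, 0 ≤ x → x < 1 / 2 → G x = α * G (2 * x) - 1 / 2)
    (h1 : ∀ x : ℝ, 1 / 2 ≤ x → x ≤ 1 → G x = (1 - α) * G (2 * x - 1) + 1 / 2) :
    ∀ k : ℕ, ∀ ω : ℕ → ℕ, (∀ n, ω n ≤ 1) → 1 ≤ k → ω k = 1 →
    G (∑ n ∈ Finset.Icc 1 k, (ω n : ℝ) / 2 ^ n) =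
      (1 / 2 : ℂ) * ∑ n ∈ Finset.Ico 1 k,
        (-1 : ℂ) ^ (1 - ω n) * α ^ (n - 1 - q ω (n - 1)) * (1 - α) ^ (q ω (n - 1)) := by
  intro k
  induction k with
  | zero => intro ω _ h; omega
  | succ k ih =>
    intro ω hω _ hωk
    rcases Nat.eq_zero_or_pos k with rfl | hk
    · -- base case : k + 1 = 1, x = 1/2
      have hx : ∑ n ∈ Finset.Icc 1 1, (ω n : ℝ) / 2 ^ n = 1/2 := by
        simp [hωk]
      rw [hx, Finset.Ico_self, Finset.sum_empty, mul_zero]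
      have hG0 : G 0 = α * G 0 - 1/2 := by
        have := h0 0 le_rfl (by norm_num)
        simpa using this
      have hG12 := h1 (1/2) le_rfl (by norm_num)
      rw [show (2:ℝ) * (1/2) - 1 = 0 by norm_num] at hG12
      rw [hG12]
      linear_combination hG0
    · -- inductive step
      set ω' : ℕ → ℕ := fun n => ω (n+1) with hω'def
      have hω' : ∀ n, ω' n ≤ 1 := fun n => hω _
      have hω'k : ω' k = 1 := hωk
      have IH := ih ω' hω' hk hω'k
      set x' : ℝ := ∑ n ∈ Finset.Icc 1 k, (ω' n : ℝ) / 2 ^ n with hx'def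
      have hx'nonneg : 0 ≤ x' := Finset.sum_nonneg fun i _ => by positivity
      have hx'lt : x' < 1 := sum_lt_one ω' hω' k
      have hx : ∑ n ∈ Finset.Icc 1 (k+1), (ω n : ℝ) / 2 ^ n = (ω 1 : ℝ) / 2 + x' / 2 := by
        have hins : Finset.Icc 1 (k+1) = insert 1 (Finset.Icc 2 (k+1)) := by
          ext x; simp only [Finset.mem_Icc, Finset.mem_insert]; omega
        rw [hins, Finset.sum_insert (by simp)]
        congr 1
        · norm_num
        · rw [show (2:ℕ) = 1 + 1 by rfl, sum_shift (fun n => (ω n : ℝ)/2^n) 1 k,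
            hx'def, Finset.sum_div]
          apply Finset.sum_congr rfl
          intro i _
          simp only [hω'def]
          ring
      -- RHS sum splitting
      have hsplit : ∀ f : ℕ → ℂ, ∑ n ∈ Finset.Ico 1 (k+1), f n
          = f 1 + ∑ m ∈ Finset.Ico 1 k, f (m+1) := by
        intro f
        have hins : Finset.Ico 1 (k+1) = insert 1 (Finset.Ico 2 (k+1)) := by
          ext x; simp only [Finset.mem_Ico, Finset.mem_insert]; omega
        rw [hins, Finset.sum_insert (by simp), show (2:ℕ) = 1 + 1 by rfl,
          sum_shift_Ico f 1 k]
      rw [hx, hsplit]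
      have hq0 : q ω 0 = 0 := by simp [q]
      -- term at n = 1
      have hterm1 : (-1 : ℂ) ^ (1 - ω 1) * α ^ (1 - 1 - q ω (1 - 1)) * (1 - α) ^ (q ω (1 - 1))
          = (-1 : ℂ) ^ (1 - ω 1) := by
        simp [hq0]
      rcases Nat.le_one_iff_eq_zero_or_eq_one.mp (hω 1) with hb | hb
      · -- ω 1 = 0 : x = x'/2 ∈ [0, 1/2)
        have hxeq : (ω 1 : ℝ) / 2 + x' / 2 = x' / 2 := by rw [hb]; norm_num
        rw [hxeq]
        have hGx := h0 (x'/2) (by linarith) (by linarith)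
        rw [show (2:ℝ) * (x'/2) = x' by ring] at hGx
        rw [hGx, IH]
        have hterms : ∀ m ∈ Finset.Ico 1 k,
            (-1 : ℂ) ^ (1 - ω (m+1)) * α ^ (m+1 - 1 - q ω (m+1 - 1)) * (1 - α) ^ (q ω (m+1 - 1))
            = α * ((-1 : ℂ) ^ (1 - ω' m) * α ^ (m - 1 - q ω' (m - 1)) * (1 - α) ^ (q ω' (m - 1))) := by
          intro m hm
          have hm1 : 1 ≤ m := (Finset.mem_Ico.mp hm).1
          obtain ⟨j, rfl⟩ : ∃ j, m = j + 1 := ⟨m - 1, by omega⟩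
          have hq : q ω (j+1) = ω 1 + q ω' j := q_shift ω j
          have hqle : q ω' j ≤ j := q_le ω' hω' j
          simp only [Nat.add_sub_cancel, hq, hb, zero_add]
          rw [show j + 1 - q ω' j = (j - q ω' j) + 1 by omega, pow_succ]
          ring
        rw [Finset.sum_congr rfl hterms, ← Finset.mul_sum]
        rw [hterm1, hb]
        push_cast
        ring
      · -- ω 1 = 1 : x = 1/2 + x'/2 ∈ [1/2, 1]
        have hxeq : (ω 1 : ℝ) / 2 + x' / 2 = 1/2 + x' / 2 := by rw [hb]; norm_num
        rw [hxeq]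
        have hGx := h1 (1/2 + x'/2) (by linarith) (by linarith)
        rw [show (2:ℝ) * (1/2 + x'/2) - 1 = x' by ring] at hGx
        rw [hGx, IH]
        have hterms : ∀ m ∈ Finset.Ico 1 k,
            (-1 : ℂ) ^ (1 - ω (m+1)) * α ^ (m+1 - 1 - q ω (m+1 - 1)) * (1 - α) ^ (q ω (m+1 - 1))
            = (1 - α) * ((-1 : ℂ) ^ (1 - ω' m) * α ^ (m - 1 - q ω' (m - 1)) * (1 - α) ^ (q ω' (m - 1))) := by
          intro m hm
          have hm1 : 1 ≤ m := (Finset.mem_Ico.mp hm).1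
          obtain ⟨j, rfl⟩ : ∃ j, m = j + 1 := ⟨m - 1, by omega⟩
          have hq : q ω (j+1) = ω 1 + q ω' j := q_shift ω j
          simp only [Nat.add_sub_cancel, hq, hb]
          rw [show j + 1 - (1 + q ω' j) = j - q ω' j by omega, show 1 + q ω' j = q ω' j + 1 by omega, pow_succ]
          ring
        rw [Finset.sum_congr rfl hterms, ← Finset.mul_sum]
        rw [hterm1, hb]
        push_cast
        ring

theorem G_explicit_dyadic (G : ℝ → ℂ)
    (hcont : ContinuousOn G (Set.Icc 0 1))
    (h0 : ∀ x : ℝ, 0 ≤ x → x < 1 / 2 → G x = α * G (2 * x) - 1 / 2)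
    (h1 : ∀ x : ℝ, 1 / 2 ≤ x → x ≤ 1 → G x = (1 - α) * G (2 * x - 1) + 1 / 2)
    (ω : ℕ → ℕ) (hω : ∀ n, ω n ≤ 1) (k : ℕ) (hk : 1 ≤ k)
    (hωk : ω k = 1) :
    G (∑ n ∈ Finset.Icc 1 k, (ω n : ℝ) / 2 ^ n) =
      (1 / 2 : ℂ) * ∑ n ∈ Finset.Ico 1 k,
        (-1 : ℂ) ^ (1 - ω n) * α ^ (n - 1 - q ω (n - 1)) * (1 - α) ^ (q ω (n - 1)) := by
  exact aux_main G h0 h1 k ω hω hk hωk
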